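/- arXiv:2303.13947 — 2 statements merged into one kernel-verified Lean document; each statement's English description precedes it below -/
import Mathlib

section
/- For permutations σ, τ of {1,…,r}, the composition of the partial maps (U_τ, p_τ) and (U_σ, p_σ) is contained in (U_{τσ}, p_{τσ}): i.e., U_σ ∩ p_σ^{-1}(U_τ) ⊆ U_{τσ}, and on this set p_τ ∘ p_σ = p_{τσ}. -/
namespace Equiv.Perm

variable {ι β : Type*}

/-- The set `U_σ` of the paper. -/
def inversionGeneric [LinearOrder ι] (σ : Perm ι) : Set (ι → β) :=
  {α | ∀ i j, i < j → σ j < σ i → α i ≠ α j}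

theorem comp_inv_comp_inv (σ τ : Perm ι) (α : ι → β) :
    (α ∘ ⇑σ⁻¹) ∘ ⇑τ⁻¹ = α ∘ ⇑(τ * σ)⁻¹ := by
  rw [mul_inv_rev, coe_mul, Function.comp_assoc]

/-- An inversion `(i, j)` of `τσ` is either an inversion of `σ`, or `σ` keeps its order and
`(σ i, σ j)` is an inversion of `τ`. -/
theorem inversionGeneric_inter_preimage_subset [LinearOrder ι] (σ τ : Perm ι) :
    inversionGeneric σ ∩ (· ∘ ⇑σ⁻¹) ⁻¹' inversionGeneric τ ⊆
      (inversionGeneric (τ * σ) : Set (ι → β)) := by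
  rintro α ⟨hσ, hτ⟩ i j hij hτσ
  rcases lt_or_gt_of_ne (σ.injective.ne hij.ne) with hlt | hgt
  · simpa using hτ (σ i) (σ j) hlt hτσ
  · exact hσ i j hij hgt

end Equiv.Perm

/-- The composition of the partial maps `(U_τ, p_τ)` and `(U_σ, p_σ)` is contained in
`(U_{τσ}, p_{τσ})`: `U_σ ∩ p_σ⁻¹(U_τ) ⊆ U_{τσ}`, and on this set `p_τ ∘ p_σ = p_{τσ}`. -/
theorem stmt7 {r : ℕ} (σ τ : Equiv.Perm (Fin r)) :
    let Uσ : Equiv.Perm (Fin r) → Set (Fin r → ℂ) :=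
      fun ρ => {α | ∀ i j : Fin r, i < j → ρ j < ρ i → α i ≠ α j}
    let p : Equiv.Perm (Fin r) → (Fin r → ℂ) → (Fin r → ℂ) :=
      fun ρ α k => α (ρ⁻¹ k)
    (Uσ σ ∩ (p σ) ⁻¹' (Uσ τ) ⊆ Uσ (τ * σ)) ∧
    (∀ α ∈ Uσ σ ∩ (p σ) ⁻¹' (Uσ τ), p τ (p σ α) = p (τ * σ) α) :=
  ⟨Equiv.Perm.inversionGeneric_inter_preimage_subset σ τ,
    fun α _ => Equiv.Perm.comp_inv_comp_inv σ τ α⟩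
end

section
/- Let p : X → Y be a local homeomorphism between topological spaces with X Hausdorff and locally compact, and let K ⊆ X be a compact subset such that p restricted to K is injective. Then there exists an open set U with K ⊆ U ⊆ X such that p restricted to U is injective (hence an open embedding). -/
/-!
In `X × X` the pairs `(a, b)` with `p a = p b → a = b` form an open set: near a diagonal point
this is local injectivity, and off the fibre product it holds because `Y` is Hausdorff.
This open set contains `K ×ˢ K`, so by the tube lemma it contains `U ×ˢ U` for some open
`U ⊇ K`, and an injective local homeomorphism on an open set is an open embedding.
-/

open Set Topology

section

variable {X Y : Type*} [TopologicalSpace X] [TopologicalSpace Y]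

theorem IsCompact.exists_isOpen_superset_prod_subset {K : Set X} (hK : IsCompact K)
    {W : Set (X × X)} (hW : IsOpen W) (hKW : K ×ˢ K ⊆ W) :
    ∃ U : Set X, IsOpen U ∧ K ⊆ U ∧ U ×ˢ U ⊆ W := by
  obtain ⟨u, v, hu, hv, hKu, hKv, huv⟩ := generalized_tube_lemma hK hK hW hKW
  exact ⟨u ∩ v, hu.inter hv, subset_inter hKu hKv,
    (prod_mono inter_subset_left inter_subset_right).trans huv⟩

theorem IsLocallyInjective.isOpen_setOf_apply_eq_imp_eq [T2Space Y] {f : X → Y}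
    (hf : IsLocallyInjective f) (hc : Continuous f) :
    IsOpen {q : X × X | f q.1 = f q.2 → q.1 = q.2} := by
  rw [isOpen_iff_mem_nhds]
  rintro ⟨a, b⟩ hab
  by_cases hfab : f a = f b
  · obtain rfl : a = b := hab hfab
    obtain ⟨U, hU, hUinj⟩ := isLocallyInjective_iff_nhds.mp hf a
    filter_upwards [prod_mem_nhds hU hU] with q hq using hUinj hq.1 hq.2
  · have hne : IsOpen {q : X × X | f q.1 ≠ f q.2} :=
      isOpen_ne_fun (hc.comp continuous_fst) (hc.comp continuous_snd)
    filter_upwards [hne.mem_nhds hfab] with q hq heq using absurd heq hq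

theorem IsLocallyInjective.exists_isOpen_superset_injOn [T2Space Y] {f : X → Y}
    (hf : IsLocallyInjective f) (hc : Continuous f) {K : Set X} (hK : IsCompact K)
    (hinj : InjOn f K) : ∃ U : Set X, IsOpen U ∧ K ⊆ U ∧ InjOn f U := by
  obtain ⟨U, hU, hKU, hUW⟩ := hK.exists_isOpen_superset_prod_subset
    (hf.isOpen_setOf_apply_eq_imp_eq hc) fun q hq ↦ hinj hq.1 hq.2
  exact ⟨U, hU, hKU, fun a ha b hb ↦ hUW (mk_mem_prod ha hb)⟩

theorem IsLocalHomeomorph.isOpenEmbedding_domRestrict_of_injOn {f : X → Y}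
    (hf : IsLocalHomeomorph f) {U : Set X} (hU : IsOpen U) (hinj : InjOn f U) :
    IsOpenEmbedding (U.domRestrict f) :=
  (hf.comp hU.isOpenEmbedding_subtypeVal.isLocalHomeomorph).isOpenEmbedding_of_injective
    hinj.injective

end

theorem stmt13_general {X Y : Type*} [TopologicalSpace X] [TopologicalSpace Y]
    [T2Space Y]
    (p : X → Y) (hp : IsLocalHomeomorph p)
    (K : Set X) (hK : IsCompact K) (hinj : Set.InjOn p K) :
    ∃ U : Set X, IsOpen U ∧ K ⊆ U ∧ Set.InjOn p U ∧
      Topology.IsOpenEmbedding (U.restrict p) := by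
  obtain ⟨U, hU, hKU, hUinj⟩ :=
    hp.isLocallyInjective.exists_isOpen_superset_injOn hp.continuous hK hinj
  exact ⟨U, hU, hKU, hUinj, hp.isOpenEmbedding_domRestrict_of_injOn hU hUinj⟩

/-- A local homeomorphism that is injective on a compact set is injective (hence an open
embedding) on some open neighborhood of that compact set. -/
theorem stmt13 {X Y : Type*} [TopologicalSpace X] [TopologicalSpace Y]
    [T2Space X] [LocallyCompactSpace X] [T2Space Y]
    (p : X → Y) (hp : IsLocalHomeomorph p)
    (K : Set X) (hK : IsCompact K) (hinj : Set.InjOn p K) :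
    ∃ U : Set X, IsOpen U ∧ K ⊆ U ∧ Set.InjOn p U ∧
      Topology.IsOpenEmbedding (U.restrict p) :=
  stmt13_general p hp K hK hinj
end
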